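/- Let τ be a permutation of a finite set and let a, b, c be three elements lying in three distinct cycles of τ. Then the permutation obtained from τ by pre-composing with the 3-cycle (a b c) has exactly two fewer cycles than τ, the three cycles through a, b, c being merged into one. -/

import Mathlib

/-!
Pre-composing a permutation `σ` with a transposition `(x y)`, where `x` and `y` lie in different
cycles of `σ`, splices these two cycles into one and leaves every other cycle alone: the cycles of
`σ * (x y)` are the `σ`-cycles with the classes of `x` and `y` identified. Since
`(a b c) = (a c) * (a b)`, pre-composing with the 3-cycle performs two such merges, the second
one because `a` and `b` still lie in different cycles after the first.
-/

/-- The number of cycles (orbits, counting fixed points) of a permutation of a finite set. -/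
def numCycles {α : Type*} [Fintype α] [DecidableEq α] (τ : Equiv.Perm α) : ℕ :=
  (Fintype.card α - τ.cycleType.sum) + τ.cycleType.card

open Function

theorem Set.range_update_id {β : Type*} [DecidableEq β] {a b : β} (h : b ≠ a) :
    Set.range (update id a b) = {a}ᶜ := by
  ext c
  refine ⟨?_, fun hc => ⟨c, update_of_ne hc _ _⟩⟩
  rintro ⟨d, rfl⟩
  by_cases hd : d = a
  · simpa [hd] using h
  · simpa [update_of_ne hd] using hd

theorem Nat.card_compl_singleton {β : Type*} [Finite β] (a : β) :
    Nat.card ({a}ᶜ : Set β) = Nat.card β - 1 := by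
  rw [Nat.card_coe_set_eq, Set.ncard_compl, Set.ncard_singleton]

namespace Equiv.Perm

variable {α : Type*}

theorem SameCycle.rel_of_forall_rel_apply {f : Perm α} {r : Setoid α} (h : ∀ u, r u (f u))
    {u v : α} (huv : f.SameCycle u v) : r u v := by
  obtain ⟨i, rfl⟩ := huv
  induction i using Int.induction_on with
  | zero => exact r.refl u
  | succ n ih =>
    rw [add_comm, zpow_one_add, mul_apply]
    exact r.trans ih (h _)
  | pred n ih =>
    rw [sub_eq_neg_add, zpow_add, zpow_neg_one, mul_apply]
    exact r.trans ih (r.symm (by simpa only [coe_inv, apply_symm_apply] using h (f⁻¹ _)))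

section Fintype

variable [Fintype α] [DecidableEq α]

def cycleClass (σ : Perm α) (x : α) : {x // x ∉ σ.support} ⊕ σ.cycleFactorsFinset :=
  if hx : x ∈ σ.support then .inr ⟨σ.cycleOf x, cycleOf_mem_cycleFactorsFinset_iff.2 hx⟩
  else .inl ⟨x, hx⟩

theorem cycleClass_eq_iff (σ : Perm α) {x y : α} :
    cycleClass σ x = cycleClass σ y ↔ σ.SameCycle x y := by
  by_cases hx : x ∈ σ.support <;> by_cases hy : y ∈ σ.support
  · simp [cycleClass, hx, hy, sameCycle_iff_cycleOf_eq_of_mem_support hx hy]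
  · simpa [cycleClass, hx, hy] using fun h => hy (h.mem_support_iff.1 hx)
  · simpa [cycleClass, hx, hy] using fun h => hx (h.mem_support_iff.2 hy)
  · simp only [cycleClass, hx, hy, dite_false, Sum.inl.injEq, Subtype.mk.injEq]
    exact ⟨fun h => h ▸ SameCycle.refl σ x,
      fun h => h.eq_of_left (notMem_support.1 hx)⟩

theorem cycleClass_surjective (σ : Perm α) : Surjective (cycleClass σ) := by
  rintro (⟨x, hx⟩ | ⟨c, hc⟩)
  · exact ⟨x, by simp [cycleClass, hx]⟩
  · obtain ⟨a, ha⟩ := (mem_cycleFactorsFinset_iff.1 hc).1.nonempty_support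
    have ha' : a ∈ σ.support := mem_cycleFactorsFinset_support_le hc ha
    refine ⟨a, ?_⟩
    simp [cycleClass, ha', ← cycle_is_cycleOf ha hc]

theorem numCycles_eq_card_quotient (σ : Perm α) :
    numCycles σ = Nat.card (Quotient (SameCycle.setoid σ)) := by
  have hker : SameCycle.setoid σ = Setoid.ker (cycleClass σ) :=
    Setoid.ext fun _ _ => (cycleClass_eq_iff σ).symm
  rw [hker, Nat.card_congr (Setoid.quotientKerEquivOfSurjective _ (cycleClass_surjective σ)),
    Nat.card_sum, numCycles, sum_cycleType, cycleType_def, Multiset.card_map]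
  simp only [Nat.card_eq_fintype_card, Fintype.card_subtype_compl, Fintype.card_coe,
    Finset.card_val]

end Fintype

section MulSwap

variable [Finite α] [DecidableEq α] {σ : Perm α} {x y : α}

theorem sameCycle_mul_swap (h : ¬σ.SameCycle x y) :
    (σ * swap x y).SameCycle x y := by
  -- From `y`, the permutation `σ * swap x y` runs along the `σ`-cycle of `x`, starting at `σ x`.
  have hmul : ∀ k : ℕ, (σ * swap x y).SameCycle y ((σ ^ k) (σ x)) := by
    intro k
    induction k with
    | zero => simpa using sameCycle_apply_right.2 (SameCycle.refl (σ * swap x y) y)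
    | succ k ih =>
      rw [pow_succ', mul_apply]
      by_cases hx : (σ ^ k) (σ x) = x
      · rw [hx]
        simpa using sameCycle_apply_right.2 (SameCycle.refl (σ * swap x y) y)
      · have hy : (σ ^ k) (σ x) ≠ y := fun e =>
          h (e ▸ sameCycle_pow_right.2 (sameCycle_apply_right.2 SameCycle.rfl))
        have hσ : σ ((σ ^ k) (σ x)) = (σ * swap x y) ((σ ^ k) (σ x)) := by
          simp [swap_apply_of_ne_of_ne hx hy]
        rw [hσ]
        exact ih.trans (sameCycle_apply_right.2 SameCycle.rfl)
  obtain ⟨n, -, hn⟩ := (sameCycle_apply_left.2 (SameCycle.refl σ x)).exists_pow_eq'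
  exact (hn ▸ hmul n).symm

theorem SameCycle.mul_swap (h : ¬σ.SameCycle x y) {u v : α} (huv : σ.SameCycle u v) :
    (σ * swap x y).SameCycle u v := by
  refine SameCycle.rel_of_forall_rel_apply (r := SameCycle.setoid (σ * swap x y)) (fun w => ?_) huv
  show (σ * swap x y).SameCycle w (σ w)
  by_cases hwx : w = x
  · subst hwx
    simpa using sameCycle_apply_right.2 (sameCycle_mul_swap h)
  by_cases hwy : w = y
  · subst hwy
    simpa using sameCycle_apply_right.2 (sameCycle_mul_swap h).symm
  simpa [swap_apply_of_ne_of_ne hwx hwy] using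
    sameCycle_apply_right.2 (SameCycle.refl (σ * swap x y) w)

open Classical in
theorem sameCycle_mul_swap_iff (h : ¬σ.SameCycle x y) {u v : α} :
    (σ * swap x y).SameCycle u v ↔
      update id ⟦y⟧ ⟦x⟧ (⟦u⟧ : Quotient (SameCycle.setoid σ)) = update id ⟦y⟧ ⟦x⟧ ⟦v⟧ := by
  set q : α → Quotient (SameCycle.setoid σ) := Quotient.mk _
  have hq : ∀ w, q (σ w) = q w := fun w => Quotient.sound (sameCycle_apply_left.2 SameCycle.rfl)
  have hxy : q x ≠ q y := fun e => h (Quotient.exact e)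
  constructor
  · refine SameCycle.rel_of_forall_rel_apply (r := Setoid.ker (update id (q y) (q x) ∘ q))
      (fun w => ?_)
    by_cases hwx : w = x
    · subst hwx
      simp [hq, hxy]
    by_cases hwy : w = y
    · subst hwy
      simp [hq, hxy]
    simp [swap_apply_of_ne_of_ne hwx hwy, hq]
  · intro huv
    by_cases hu : q u = q y <;> by_cases hv : q v = q y <;>
      simp only [update_apply, hu, hv, if_true, if_false, id] at huv
    · exact (Quotient.exact hu).trans (Quotient.exact hv).symm |>.mul_swap h
    · exact ((Quotient.exact hu).mul_swap h).trans
        ((sameCycle_mul_swap h).symm.trans ((Quotient.exact huv).mul_swap h))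
    · exact ((Quotient.exact huv).mul_swap h).trans
        ((sameCycle_mul_swap h).trans ((Quotient.exact hv).symm.mul_swap h))
    · exact (Quotient.exact huv).mul_swap h

theorem sameCycle_mul_swap_iff_of_not_sameCycle (h : ¬σ.SameCycle x y) {u v : α}
    (hu : ¬σ.SameCycle u y) (hv : ¬σ.SameCycle v y) :
    (σ * swap x y).SameCycle u v ↔ σ.SameCycle u v := by
  classical
  rw [sameCycle_mul_swap_iff h, update_of_ne (fun e => hu (Quotient.exact e)),
    update_of_ne (fun e => hv (Quotient.exact e))]
  exact Quotient.eq

end MulSwap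

theorem numCycles_mul_swap [Fintype α] [DecidableEq α] {σ : Perm α} {x y : α}
    (h : ¬σ.SameCycle x y) :
    numCycles (σ * swap x y) = numCycles σ - 1 := by
  classical
  set q : α → Quotient (SameCycle.setoid σ) := Quotient.mk _
  have hxy : q x ≠ q y := fun e => h (Quotient.exact e)
  have hker : SameCycle.setoid (σ * swap x y) = Setoid.ker (update id (q y) (q x) ∘ q) :=
    Setoid.ext fun _ _ => sameCycle_mul_swap_iff h
  rw [numCycles_eq_card_quotient, numCycles_eq_card_quotient, hker,
    Nat.card_congr (Setoid.quotientKerEquivRange _), Quotient.mk_surjective.range_comp,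
    Set.range_update_id hxy, Nat.card_compl_singleton]

end Equiv.Perm

theorem numCycles_mul_three_cycle_general {α : Type*} [Fintype α] [DecidableEq α]
    (τ : Equiv.Perm α) (a b c : α)
    (hcycab : ¬ τ.SameCycle a b) (hcycac : ¬ τ.SameCycle a c) (hcycbc : ¬ τ.SameCycle b c) :
    numCycles (τ * (Equiv.swap a c * Equiv.swap a b)) = numCycles τ - 2 ∧
      (τ * (Equiv.swap a c * Equiv.swap a b)).SameCycle a b ∧
      (τ * (Equiv.swap a c * Equiv.swap a b)).SameCycle a c := by
  open Equiv.Perm in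
  rw [← mul_assoc]
  have hab : ¬(τ * Equiv.swap a c).SameCycle a b := by
    rwa [sameCycle_mul_swap_iff_of_not_sameCycle hcycac hcycac hcycbc]
  refine ⟨?_, sameCycle_mul_swap hab, (sameCycle_mul_swap hcycac).mul_swap hab⟩
  rw [numCycles_mul_swap hab, numCycles_mul_swap hcycac, Nat.sub_sub]

/-- If `a`, `b`, `c` lie in three distinct cycles of a permutation `τ`, then pre-composing
`τ` with the 3-cycle `(a b c)` merges the three cycles through `a`, `b`, `c` into one and
produces a permutation with exactly two fewer cycles. -/
theorem numCycles_mul_three_cycle {α : Type*} [Fintype α] [DecidableEq α]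
    (τ : Equiv.Perm α) (a b c : α)
    (hab : a ≠ b) (hac : a ≠ c) (hbc : b ≠ c)
    (hcycab : ¬ τ.SameCycle a b) (hcycac : ¬ τ.SameCycle a c) (hcycbc : ¬ τ.SameCycle b c) :
    numCycles (τ * (Equiv.swap a c * Equiv.swap a b)) = numCycles τ - 2 ∧
      (τ * (Equiv.swap a c * Equiv.swap a b)).SameCycle a b ∧
      (τ * (Equiv.swap a c * Equiv.swap a b)).SameCycle a c :=
  numCycles_mul_three_cycle_general τ a b c hcycab hcycac hcycbc
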